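/- arXiv:1606.08319 — 6 statements merged into one kernel-verified Lean document; each statement's English description precedes it below -/
import Mathlib

section
/- Let H be a Hilbert space, a(·,·) a continuous hermitian sesquilinear form on H with a(w,w) > 0 for all w ≠ 0, and K : H → H* a compact linear operator. If there exists α̃ > 0 such that α̃‖v‖² ≤ Re(a(v,v) + ⟨Kv, v⟩) for all v ∈ H, then there exists α > 0 such that α‖v‖² ≤ a(v,v) for all v ∈ H. -/
/-!
If `a` were not coercive, there would be unit vectors `uₙ` with `re a(uₙ, uₙ) → 0`. Compactness
of `K` makes `K uₙ` converge along a subsequence. Gårding's inequality applied to `uₙ - uₘ`,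
together with the parallelogram bound `re a(x - y, x - y) ≤ 2 (re a(x, x) + re a(y, y))`, shows
that this subsequence is Cauchy. Its limit `v` is a unit vector with `a(v, v) = 0` by continuity,
contradicting strict positivity.
-/

open RCLike Filter Topology

theorem cauchySeq_of_dist_sq_le {α β : Type*} [PseudoMetricSpace α] [PseudoMetricSpace β]
    {u : ℕ → α} {v : ℕ → β} {ε : ℕ → ℝ} (C : ℝ) (hε : Tendsto ε atTop (𝓝 0))
    (hv : CauchySeq v) (h : ∀ m n, dist (u m) (u n) ^ 2 ≤ C * (ε m + ε n + dist (v m) (v n))) :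
    CauchySeq u := by
  rw [cauchySeq_iff_tendsto_dist_atTop_0] at hv ⊢
  have hε₂ : Tendsto (fun p : ℕ × ℕ => ε p.1 + ε p.2) atTop (𝓝 0) := by
    rw [← prod_atTop_atTop_eq]
    simpa using (hε.comp tendsto_fst).add (hε.comp tendsto_snd)
  have hsq : Tendsto (fun p : ℕ × ℕ => dist (u p.1) (u p.2) ^ 2) atTop (𝓝 0) :=
    squeeze_zero (fun _ => by positivity) (fun p => h p.1 p.2) <| by
      simpa using ((hε₂.add hv).const_mul C)
  simpa [Real.sqrt_sq dist_nonneg] using hsq.sqrt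

namespace ContinuousLinearMap

variable {𝕜 E : Type*} [RCLike 𝕜] [NormedAddCommGroup E] [NormedSpace 𝕜 E]

theorem re_apply_smul_ofReal_self (B : E →L⋆[𝕜] E →L[𝕜] 𝕜) (t : ℝ) (v : E) :
    re (B ((t : 𝕜) • v) ((t : 𝕜) • v)) = t ^ 2 * re (B v v) := by
  simp only [map_smulₛₗ, smul_apply, smul_eq_mul, conj_ofReal, RingHom.id_apply, ← mul_assoc,
    ← ofReal_mul, re_ofReal_mul]
  ring

theorem apply_add_self_add_apply_sub_self (B : E →L⋆[𝕜] E →L[𝕜] 𝕜) (x y : E) :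
    B (x + y) (x + y) + B (x - y) (x - y) = 2 * B x x + 2 * B y y := by
  simp only [map_add, map_sub, add_apply, sub_apply]
  ring

theorem re_apply_sub_self_le (B : E →L⋆[𝕜] E →L[𝕜] 𝕜) (hB : ∀ v, 0 ≤ re (B v v)) (x y : E) :
    re (B (x - y) (x - y)) ≤ 2 * (re (B x x) + re (B y y)) := by
  have := congrArg re (B.apply_add_self_add_apply_sub_self x y)
  rw [map_add re, map_add re, ofNat_mul_re, ofNat_mul_re] at this
  linarith [hB (x + y)]

theorem exists_norm_eq_one_re_apply_self_lt (B : E →L⋆[𝕜] E →L[𝕜] 𝕜)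
    (h : ¬ ∃ α > 0, ∀ v, α * ‖v‖ ^ 2 ≤ re (B v v)) {ε : ℝ} (hε : 0 < ε) :
    ∃ u, ‖u‖ = 1 ∧ re (B u u) < ε := by
  push Not at h
  obtain ⟨v, hv⟩ := h ε hε
  have hv0 : v ≠ 0 := by
    rintro rfl
    simp at hv
  refine ⟨(‖v‖ : 𝕜)⁻¹ • v, norm_smul_inv_norm hv0, ?_⟩
  have hnv : 0 < ‖v‖ := norm_pos_iff.mpr hv0
  rw [← ofReal_inv, re_apply_smul_ofReal_self, inv_pow, inv_mul_lt_iff₀ (by positivity), mul_comm]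
  exact hv

theorem mul_norm_sub_sq_le_of_garding (B : E →L⋆[𝕜] E →L[𝕜] 𝕜) (hB : ∀ v, 0 ≤ re (B v v))
    (K : E →L[𝕜] E →L[𝕜] 𝕜) {α' : ℝ} (hG : ∀ v, α' * ‖v‖ ^ 2 ≤ re (B v v + K v v))
    {x y : E} (hx : ‖x‖ ≤ 1) (hy : ‖y‖ ≤ 1) :
    α' * ‖x - y‖ ^ 2 ≤ 2 * (re (B x x) + re (B y y) + ‖K x - K y‖) := by
  have hKxy : re (K (x - y) (x - y)) ≤ 2 * ‖K x - K y‖ :=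
    calc re (K (x - y) (x - y)) ≤ ‖K (x - y)‖ * ‖x - y‖ :=
          (re_le_norm _).trans ((K (x - y)).le_opNorm _)
      _ ≤ ‖K x - K y‖ * 2 := by
          rw [map_sub]
          gcongr
          linarith [norm_sub_le x y]
      _ = 2 * ‖K x - K y‖ := mul_comm _ _
  have hGxy := hG (x - y)
  rw [map_add re] at hGxy
  linarith [B.re_apply_sub_self_le hB x y]

theorem exists_coercive_of_garding [CompleteSpace E] (B : E →L⋆[𝕜] E →L[𝕜] 𝕜)
    (hpos : ∀ v, v ≠ 0 → 0 < re (B v v)) (K : E →L[𝕜] E →L[𝕜] 𝕜) (hK : IsCompactOperator K)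
    {α' : ℝ} (hα' : 0 < α') (hG : ∀ v, α' * ‖v‖ ^ 2 ≤ re (B v v + K v v)) :
    ∃ α > 0, ∀ v, α * ‖v‖ ^ 2 ≤ re (B v v) := by
  by_contra h
  have hB : ∀ v, 0 ≤ re (B v v) := fun v => by
    rcases eq_or_ne v 0 with rfl | hv
    · simp
    · exact (hpos v hv).le
  choose u hu1 hBu using fun n : ℕ =>
    B.exists_norm_eq_one_re_apply_self_lt h (Nat.one_div_pos_of_nat (n := n))
  have hBu0 : Tendsto (fun n => re (B (u n) (u n))) atTop (𝓝 0) :=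
    squeeze_zero (fun n => hB _) (fun n => (hBu n).le) tendsto_one_div_add_atTop_nhds_zero_nat
  obtain ⟨S, hS, hKS⟩ := hK.image_closedBall_subset_compact (1 : ℝ)
  obtain ⟨_, -, φ, hφ, hKφ⟩ := hS.tendsto_subseq fun n =>
    hKS ⟨u n, mem_closedBall_zero_iff.mpr (hu1 n).le, rfl⟩
  have hcauchy : CauchySeq (u ∘ φ) := by
    refine cauchySeq_of_dist_sq_le (2 / α') (hBu0.comp hφ.tendsto_atTop)
      hKφ.cauchySeq fun m n => ?_
    rw [dist_eq_norm, dist_eq_norm, div_mul_eq_mul_div, le_div_iff₀ hα', mul_comm]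
    exact mul_norm_sub_sq_le_of_garding B hB K hG (hu1 _).le (hu1 _).le
  obtain ⟨v, hv⟩ := cauchySeq_tendsto_of_complete hcauchy
  have hv1 : ‖v‖ = 1 := tendsto_nhds_unique hv.norm (by simp [hu1])
  have hBv : re (B v v) = 0 := by
    refine tendsto_nhds_unique ?_ (hBu0.comp hφ.tendsto_atTop)
    have hcont : Continuous fun w => re (B w w) := by fun_prop
    exact (hcont.tendsto v).comp hv
  exact (hpos v (by rintro rfl; simp at hv1)).ne' hBv

end ContinuousLinearMap

/-- Gårding-type ellipticity of the compactly perturbed form plus strict positivity of `a`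
implies ellipticity of `a` itself. -/
theorem stmt3 {𝕜 : Type*} [RCLike 𝕜] {H : Type*} [NormedAddCommGroup H]
    [InnerProductSpace 𝕜 H] [CompleteSpace H]
    (a : H → H → 𝕜) (M : ℝ)
    (hherm : ∀ w v, a w v = starRingEnd 𝕜 (a v w))
    (hlin : ∀ w, IsLinearMap 𝕜 (a w))
    (hcont : ∀ w v, ‖a w v‖ ≤ M * ‖w‖ * ‖v‖)
    (hpos : ∀ w : H, w ≠ 0 → 0 < re (a w w))
    (K : H →L[𝕜] (H →L[𝕜] 𝕜)) (hK : IsCompactOperator fun x => K x)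
    (α' : ℝ) (hα' : 0 < α')
    (hGarding : ∀ v : H, α' * ‖v‖ ^ 2 ≤ re (a v v + K v v)) :
    ∃ α > 0, ∀ v : H, α * ‖v‖ ^ 2 ≤ re (a v v) := by
  have hadd_left : ∀ w w' v, a (w + w') v = a w v + a w' v := fun w w' v => by
    rw [hherm, (hlin v).map_add, map_add, ← hherm, ← hherm]
  have hsmul_left : ∀ (c : 𝕜) w v, a (c • w) v = starRingEnd 𝕜 c • a w v := fun c w v => by
    rw [hherm, (hlin v).map_smul, smul_eq_mul, smul_eq_mul, map_mul, ← hherm]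
  let B : H →L⋆[𝕜] H →L[𝕜] 𝕜 :=
    (LinearMap.mk₂'ₛₗ (starRingEnd 𝕜) (RingHom.id 𝕜) a hadd_left hsmul_left
      (fun w => (hlin w).map_add) (fun c w => (hlin w).map_smul c)).mkContinuous₂ M hcont
  exact B.exists_coercive_of_garding hpos K hK hα' hGarding
end

section
/- Let ε_ℓ := |||u − U_{ℓ+1}|||² and suppose for some 0 < ε < 1, 0 < q_est < 1, C_est > 0, C_rel > 0, λ > 0 with λ·C_est ≤ 1, the inequalities (i) |||u − U_{ℓ+1}|||² + |||U_{ℓ+1} − U_ℓ|||² ≤ (1−ε)^{-1}|||u − U_ℓ|||², (ii) η_{ℓ+1}² ≤ q_est·η_ℓ² + C_est·|||U_{ℓ+1} − U_ℓ|||², and (iii) |||u − U_ℓ||| ≤ C_rel·η_ℓ hold for all ℓ ≥ ℓ₀. Then, provided ε and an auxiliary δ > 0 are chosen such that q_est + C_rel²δ < 1 and (1−ε)^{-1} − δλ < 1, the quantity Δ_ℓ² := |||u − U_ℓ|||² + λη_ℓ² satisfies Δ_{ℓ+1} ≤ q_lin·Δ_ℓ for all ℓ ≥ ℓ₀, where q_lin²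 := max{(1−ε)^{-1} − δλ, q_est + C_rel²δ} < 1. -/
/-!
Condition (i) pays for the estimator increment in (ii) because `λ C_est ≤ 1`. Splitting
`(1 - ε)⁻¹ |||u - U_ℓ|||²` as `((1 - ε)⁻¹ - δλ) |||u - U_ℓ|||² + δλ |||u - U_ℓ|||²` and bounding the
second summand by reliability (iii) turns it into estimator mass, which leaves the factor
`q_est + C_rel² δ` in front of `λ η_ℓ²`.
-/

lemma add_mul_le_max_mul_add_mul {e d E n n' κ q C R lam δ : ℝ}
    (hd : 0 ≤ d) (hE : 0 ≤ E) (hn : 0 ≤ n) (hlam : 0 ≤ lam) (hδ : 0 ≤ δ)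
    (hlamC : lam * C ≤ 1) (hi : e + d ≤ κ * E) (hii : n' ≤ q * n + C * d) (hiii : E ≤ R * n) :
    e + lam * n' ≤ max (κ - δ * lam) (q + R * δ) * (E + lam * n) := by
  set M := max (κ - δ * lam) (q + R * δ)
  have hlamCd : lam * C * d ≤ d := mul_le_of_le_one_left hd hlamC
  calc e + lam * n'
      ≤ e + lam * (q * n + C * d) := by gcongr
    _ ≤ (e + d) + lam * q * n := by linarith
    _ ≤ κ * E + lam * q * n := by gcongr
    _ = (κ - δ * lam) * E + δ * lam * E + lam * q * n := by ring
    _ ≤ (κ - δ * lam) * E + δ * lam * (R * n) + lam * q * n := by gcongr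
    _ = (κ - δ * lam) * E + (q + R * δ) * (lam * n) := by ring
    _ ≤ M * E + M * (lam * n) := by gcongr <;> [exact le_max_left _ _; exact le_max_right _ _]
    _ = M * (E + lam * n) := by ring

theorem stmt12_general {V : Type*} [NormedAddCommGroup V]
    (u : V) (U : ℕ → V) (η : ℕ → ℝ)
    (ℓ₀ : ℕ) (ε qest Cest Crel lam δ : ℝ)
    (hlam : 0 < lam) (hδ : 0 < δ)
    (hlamCest : lam * Cest ≤ 1)
    (hi : ∀ ℓ, ℓ₀ ≤ ℓ →
      ‖u - U (ℓ + 1)‖ ^ 2 + ‖U (ℓ + 1) - U ℓ‖ ^ 2 ≤ (1 - ε)⁻¹ * ‖u - U ℓ‖ ^ 2)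
    (hii : ∀ ℓ, ℓ₀ ≤ ℓ →
      η (ℓ + 1) ^ 2 ≤ qest * η ℓ ^ 2 + Cest * ‖U (ℓ + 1) - U ℓ‖ ^ 2)
    (hiii : ∀ ℓ, ℓ₀ ≤ ℓ → ‖u - U ℓ‖ ≤ Crel * η ℓ) :
    ∀ ℓ, ℓ₀ ≤ ℓ →
      Real.sqrt (‖u - U (ℓ + 1)‖ ^ 2 + lam * η (ℓ + 1) ^ 2)
        ≤ Real.sqrt (max ((1 - ε)⁻¹ - δ * lam) (qest + Crel ^ 2 * δ))
          * Real.sqrt (‖u - U ℓ‖ ^ 2 + lam * η ℓ ^ 2) := by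
  intro ℓ hℓ
  have hrel : ‖u - U ℓ‖ ^ 2 ≤ Crel ^ 2 * η ℓ ^ 2 := by
    rw [← mul_pow]
    exact pow_le_pow_left₀ (norm_nonneg _) (hiii ℓ hℓ) 2
  have hstep := add_mul_le_max_mul_add_mul (sq_nonneg ‖U (ℓ + 1) - U ℓ‖) (sq_nonneg _)
    (sq_nonneg (η ℓ)) hlam.le hδ.le hlamCest (hi ℓ hℓ) (hii ℓ hℓ) hrel
  exact (Real.sqrt_le_sqrt hstep).trans_eq (Real.sqrt_mul' _ (by positivity))

/-- Core contraction step of the linear convergence theorem. -/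
theorem stmt12 {V : Type*} [NormedAddCommGroup V]
    (u : V) (U : ℕ → V) (η : ℕ → ℝ) (hη : ∀ ℓ, 0 ≤ η ℓ)
    (ℓ₀ : ℕ) (ε qest Cest Crel lam δ : ℝ)
    (hε0 : 0 < ε) (hε1 : ε < 1) (hqest0 : 0 < qest) (hqest1 : qest < 1)
    (hCest : 0 < Cest) (hCrel : 0 < Crel) (hlam : 0 < lam) (hδ : 0 < δ)
    (hlamCest : lam * Cest ≤ 1)
    (hi : ∀ ℓ, ℓ₀ ≤ ℓ →
      ‖u - U (ℓ + 1)‖ ^ 2 + ‖U (ℓ + 1) - U ℓ‖ ^ 2 ≤ (1 - ε)⁻¹ * ‖u - U ℓ‖ ^ 2)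
    (hii : ∀ ℓ, ℓ₀ ≤ ℓ →
      η (ℓ + 1) ^ 2 ≤ qest * η ℓ ^ 2 + Cest * ‖U (ℓ + 1) - U ℓ‖ ^ 2)
    (hiii : ∀ ℓ, ℓ₀ ≤ ℓ → ‖u - U ℓ‖ ≤ Crel * η ℓ)
    (h1 : qest + Crel ^ 2 * δ < 1) (h2 : (1 - ε)⁻¹ - δ * lam < 1) :
    ∀ ℓ, ℓ₀ ≤ ℓ →
      Real.sqrt (‖u - U (ℓ + 1)‖ ^ 2 + lam * η (ℓ + 1) ^ 2)
        ≤ Real.sqrt (max ((1 - ε)⁻¹ - δ * lam) (qest + Crel ^ 2 * δ))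
          * Real.sqrt (‖u - U ℓ‖ ^ 2 + lam * η ℓ ^ 2) :=
  stmt12_general u U η ℓ₀ ε qest Cest Crel lam δ hlam hδ hlamCest hi hii hiii
end

section
/- Let H be a Hilbert space with norms ‖·‖ and ||| · ||| satisfying ‖v‖² ≤ C|||v|||². Let u ∈ H, X ⊂ H a subspace, U ∈ X with Galerkin orthogonality b(u − U, V) = 0 for all V ∈ X, where b(w,v) = a(w,v) + ⟨Kw,v⟩, a is a continuous hermitian form inducing ||| · |||, and K : H → H* is linear. Suppose δ := ‖K e‖_{H*} with e := (u − U)/‖u − U‖ (and e := 0 if u = U) satisfies Cδ < 1. Then |||u − U||| ≤ ((1 + Cδ)/(1 − Cδ)) · min_{V∈X} |||u − V|||. -/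
/-!
Write `w = u - U` and, for `V ∈ X`, `W = U - V ∈ X`, so that `u - V = w + W`. Galerkin
orthogonality turns `|||w|||²` into `Re a(w, w + W) + Re ⟨K w, W⟩`. Cauchy–Schwarz bounds the first
term by `|||w||| |||u - V|||`; the second is at most `δ ‖w‖ ‖W‖ ≤ C δ |||w||| |||W|||`, and
`|||W||| ≤ |||w||| + |||u - V|||`. Solving the resulting quadratic inequality for `|||w|||` gives the
factor `(1 + C δ) / (1 - C δ)`.
-/

open RCLike

theorem le_div_mul_of_sq_le {t s κ : ℝ} (ht : 0 ≤ t) (hs : 0 ≤ s) (hκ₀ : 0 ≤ κ) (hκ₁ : κ < 1)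
    (h : t ^ 2 ≤ t * s + κ * t * (t + s)) : t ≤ (1 + κ) / (1 - κ) * s := by
  rw [div_mul_eq_mul_div, le_div_iff₀ (by linarith)]
  rcases ht.eq_or_lt with rfl | ht
  · simp only [zero_mul]
    positivity
  · nlinarith

section Hermitian

variable {𝕜 E : Type*} [RCLike 𝕜] [AddCommGroup E] [Module 𝕜 E] (a : E → E → 𝕜)
  (hherm : ∀ w v, a w v = starRingEnd 𝕜 (a v w)) (hlin : ∀ w, IsLinearMap 𝕜 (a w))

def sesqFormOfHermitian : E →ₗ⋆[𝕜] E →ₗ[𝕜] 𝕜 :=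
  LinearMap.mk₂'ₛₗ _ _ a
    (fun x y z => by rw [hherm, (hlin z).map_add, map_add, ← hherm, ← hherm])
    (fun c x y => by rw [hherm, (hlin y).map_smul, smul_eq_mul, map_mul, ← hherm]; rfl)
    (fun x => (hlin x).map_add) (fun c x => (hlin x).map_smul c)

theorem isSymm_sesqFormOfHermitian : (sesqFormOfHermitian a hherm hlin).IsSymm :=
  ⟨fun x y => (hherm y x).symm⟩

end Hermitian

namespace LinearMap

variable {𝕜 E : Type*} [RCLike 𝕜] [AddCommGroup E] [Module 𝕜 E] {B : E →ₗ⋆[𝕜] E →ₗ[𝕜] 𝕜}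

theorem IsSymm.re_apply_comm (hB : B.IsSymm) (x y : E) : re (B x y) = re (B y x) := by
  rw [← hB.eq x y, conj_re]

theorem IsSymm.re_apply_add_smul_self (hB : B.IsSymm) (x y : E) (t : ℝ) :
    re (B (x + (t : 𝕜) • y) (x + (t : 𝕜) • y))
      = re (B x x) + 2 * t * re (B x y) + t ^ 2 * re (B y y) := by
  simp only [map_add, map_smul, map_smulₛₗ, add_apply, smul_apply, conj_ofReal, smul_eq_mul,
    re_ofReal_mul, hB.re_apply_comm y x]
  ring

theorem IsSymm.abs_re_apply_le (hB : B.IsSymm) (hpos : ∀ x, 0 ≤ re (B x x)) (x y : E) :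
    |re (B x y)| ≤ √(re (B x x)) * √(re (B y y)) := by
  have hquad : ∀ t : ℝ, 0 ≤ re (B y y) * (t * t) + 2 * re (B x y) * t + re (B x x) := by
    intro t
    have := hpos (x + (t : 𝕜) • y)
    rw [hB.re_apply_add_smul_self] at this
    linarith
  have hdiscr := discrim_le_zero hquad
  rw [discrim] at hdiscr
  rw [← Real.sqrt_mul (hpos x)]
  exact Real.abs_le_sqrt (by nlinarith)

theorem IsSymm.sqrt_re_apply_sub_le (hB : B.IsSymm) (hpos : ∀ x, 0 ≤ re (B x x)) (x y : E) :
    √(re (B (x - y) (x - y))) ≤ √(re (B x x)) + √(re (B y y)) := by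
  have hcs := hB.abs_re_apply_le hpos x y
  have hx := Real.sq_sqrt (hpos x)
  have hy := Real.sq_sqrt (hpos y)
  have hexp : re (B (x - y) (x - y)) = re (B x x) - 2 * re (B x y) + re (B y y) := by
    have := hB.re_apply_add_smul_self x y (-1)
    rw [ofReal_neg, ofReal_one, neg_one_smul, ← sub_eq_add_neg] at this
    linarith
  rw [Real.sqrt_le_iff]
  constructor
  · positivity
  · nlinarith [neg_abs_le (re (B x y))]

end LinearMap

section Galerkin

variable {𝕜 H : Type*} [RCLike 𝕜] [NormedAddCommGroup H] [NormedSpace 𝕜 H]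

theorem norm_apply_eq_mul_norm_of_eq_inv_norm_smul {F : Type*} [NormedAddCommGroup F] [NormedSpace 𝕜 F]
    (T : H →L[𝕜] F) {w e : H} (he : w ≠ 0 → e = ((‖w‖⁻¹ : ℝ) : 𝕜) • w) :
    ‖T w‖ = ‖T e‖ * ‖w‖ := by
  by_cases hw : w = 0
  · simp [hw]
  · rw [he hw, map_smul, norm_smul, norm_ofReal, abs_inv, abs_norm]
    field_simp

variable {B : H →ₗ⋆[𝕜] H →ₗ[𝕜] 𝕜} {C : ℝ}

theorem norm_le_sqrt_mul_sqrt_re (hpos : ∀ v, 0 ≤ re (B v v))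
    (hnorm : ∀ v, ‖v‖ ^ 2 ≤ C * re (B v v)) (v : H) : ‖v‖ ≤ √C * √(re (B v v)) := by
  rw [← Real.sqrt_mul' C (hpos v), ← abs_norm]
  exact Real.abs_le_sqrt (hnorm v)

theorem norm_mul_norm_le_mul_sqrt_re (hpos : ∀ v, 0 ≤ re (B v v)) (hC : 0 ≤ C)
    (hnorm : ∀ v, ‖v‖ ^ 2 ≤ C * re (B v v)) (x y : H) :
    ‖x‖ * ‖y‖ ≤ C * (√(re (B x x)) * √(re (B y y))) :=
  calc ‖x‖ * ‖y‖ ≤ (√C * √(re (B x x))) * (√C * √(re (B y y))) := by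
        gcongr <;> exact norm_le_sqrt_mul_sqrt_re hpos hnorm _
    _ = C * (√(re (B x x)) * √(re (B y y))) := by
        rw [mul_mul_mul_comm, Real.mul_self_sqrt hC]

theorem re_apply_self_le_of_galerkin (hB : B.IsSymm) (hpos : ∀ v, 0 ≤ re (B v v)) (hC : 0 ≤ C)
    (hnorm : ∀ v, ‖v‖ ^ 2 ≤ C * re (B v v)) (K : H →L[𝕜] H →L[𝕜] 𝕜) {δ : ℝ} (hδ : 0 ≤ δ)
    {w W : H} (hKw : ‖K w‖ ≤ δ * ‖w‖) (hgal : B w W + K w W = 0) :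
    re (B w w) ≤ √(re (B w w)) * √(re (B (w + W) (w + W)))
      + C * δ * √(re (B w w)) * (√(re (B w w)) + √(re (B (w + W) (w + W)))) := by
  set t := √(re (B w w))
  set s := √(re (B (w + W) (w + W)))
  have hsplit : re (B w w) = re (B w (w + W)) + re (K w W) := by
    rw [map_add, eq_neg_of_add_eq_zero_left hgal, map_add, map_neg]
    ring
  have hcs : re (B w (w + W)) ≤ t * s := (le_abs_self _).trans (hB.abs_re_apply_le hpos _ _)
  have htri : √(re (B W W)) ≤ s + t := by
    simpa only [add_sub_cancel_left] using hB.sqrt_re_apply_sub_le hpos (w + W) w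
  have hK : re (K w W) ≤ C * δ * t * (s + t) :=
    calc re (K w W) ≤ ‖K w‖ * ‖W‖ := (re_le_norm _).trans ((K w).le_opNorm W)
      _ ≤ δ * (‖w‖ * ‖W‖) := by
        rw [← mul_assoc]
        gcongr
      _ ≤ δ * (C * (t * √(re (B W W)))) :=
        mul_le_mul_of_nonneg_left (norm_mul_norm_le_mul_sqrt_re hpos hC hnorm w W) hδ
      _ = C * δ * t * √(re (B W W)) := by ring
      _ ≤ C * δ * t * (s + t) := by gcongr
  linarith

theorem sqrt_re_apply_self_le_of_galerkin (hB : B.IsSymm) (hpos : ∀ v, 0 ≤ re (B v v))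
    (hC : 0 ≤ C) (hnorm : ∀ v, ‖v‖ ^ 2 ≤ C * re (B v v)) (K : H →L[𝕜] H →L[𝕜] 𝕜) {δ : ℝ}
    (hδ : 0 ≤ δ) (hCδ : C * δ < 1) {w W : H} (hKw : ‖K w‖ ≤ δ * ‖w‖)
    (hgal : B w W + K w W = 0) :
    √(re (B w w)) ≤ (1 + C * δ) / (1 - C * δ) * √(re (B (w + W) (w + W))) := by
  refine le_div_mul_of_sq_le (Real.sqrt_nonneg _) (Real.sqrt_nonneg _) (by positivity) hCδ ?_
  rw [Real.sq_sqrt (hpos w)]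
  exact re_apply_self_le_of_galerkin hB hpos hC hnorm K hδ hKw hgal

end Galerkin

theorem stmt13_general {𝕜 : Type*} [RCLike 𝕜] {H : Type*} [NormedAddCommGroup H]
    [InnerProductSpace 𝕜 H]
    (a : H → H → 𝕜) (C : ℝ) (hC : 0 < C)
    (hherm : ∀ w v, a w v = starRingEnd 𝕜 (a v w))
    (hlin : ∀ w, IsLinearMap 𝕜 (a w))
    (hnorm : ∀ v : H, ‖v‖ ^ 2 ≤ C * re (a v v))
    (K : H →L[𝕜] (H →L[𝕜] 𝕜))
    (b : H → H → 𝕜) (hb : ∀ w v, b w v = a w v + K w v)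
    (X : Submodule 𝕜 H) (u U : H) (hU : U ∈ X)
    (hGalerkin : ∀ V ∈ X, b (u - U) V = 0)
    (e : H)
    (he1 : u ≠ U → e = ((‖u - U‖⁻¹ : ℝ) : 𝕜) • (u - U))
    (δ : ℝ) (hδ : δ = ‖K e‖) (hCδ : C * δ < 1) :
    Real.sqrt (re (a (u - U) (u - U)))
      ≤ (1 + C * δ) / (1 - C * δ)
        * ⨅ V : X, Real.sqrt (re (a (u - (V : H)) (u - (V : H)))) := by
  set B := sesqFormOfHermitian a hherm hlin
  have hB : B.IsSymm := isSymm_sesqFormOfHermitian a hherm hlin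
  have hpos : ∀ v, 0 ≤ re (B v v) := fun v =>
    nonneg_of_mul_nonneg_right ((sq_nonneg _).trans (hnorm v)) hC
  have hδ₀ : 0 ≤ δ := hδ ▸ norm_nonneg _
  have hKw : ‖K (u - U)‖ ≤ δ * ‖u - U‖ := by
    rw [hδ, norm_apply_eq_mul_norm_of_eq_inv_norm_smul K fun h => he1 (sub_ne_zero.mp h)]
  rw [Real.mul_iInf_of_nonneg (div_nonneg (by positivity) (by linarith))]
  refine le_ciInf fun V => ?_
  have hgal : B (u - U) (U - V) + K (u - U) (U - V) = 0 :=
    (hb _ _).symm.trans (hGalerkin _ (X.sub_mem hU V.2))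
  rw [← sub_add_sub_cancel u U V]
  exact sqrt_re_apply_self_le_of_galerkin hB hpos hC.le hnorm K hδ₀ hCδ hKw hgal

/-- Quantitative Céa lemma: the quasi-optimality constant tends to 1. -/
theorem stmt13 {𝕜 : Type*} [RCLike 𝕜] {H : Type*} [NormedAddCommGroup H]
    [InnerProductSpace 𝕜 H]
    (a : H → H → 𝕜) (C : ℝ) (hC : 0 < C)
    (hherm : ∀ w v, a w v = starRingEnd 𝕜 (a v w))
    (hlin : ∀ w, IsLinearMap 𝕜 (a w))
    (hnorm : ∀ v : H, ‖v‖ ^ 2 ≤ C * re (a v v))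
    (K : H →L[𝕜] (H →L[𝕜] 𝕜))
    (b : H → H → 𝕜) (hb : ∀ w v, b w v = a w v + K w v)
    (X : Submodule 𝕜 H) (u U : H) (hU : U ∈ X)
    (hGalerkin : ∀ V ∈ X, b (u - U) V = 0)
    (e : H) (he0 : u = U → e = 0)
    (he1 : u ≠ U → e = ((‖u - U‖⁻¹ : ℝ) : 𝕜) • (u - U))
    (δ : ℝ) (hδ : δ = ‖K e‖) (hCδ : C * δ < 1) :
    Real.sqrt (re (a (u - U) (u - U)))
      ≤ (1 + C * δ) / (1 - C * δ)
        * ⨅ V : X, Real.sqrt (re (a (u - (V : H)) (u - (V : H)))) :=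
  stmt13_general a C hC hherm hlin hnorm K b hb X u U hU hGalerkin e he1 δ hδ hCδ
end

section
/- Let H be a Hilbert space, b a continuous sesquilinear form on H, (X_ℓ) a nested sequence of subspaces with closure X_∞ := closure(⋃_ℓ X_ℓ), u ∈ X_∞, and (U_ℓ) a sequence with U_ℓ ∈ X_ℓ and Galerkin orthogonality b(u − U_ℓ, V) = 0 for all V ∈ X_ℓ. Define e_ℓ := (u − U_ℓ)/‖u − U_ℓ‖ if u ≠ U_ℓ and e_ℓ := 0 otherwise. Assume b is definite on X_∞: for w ∈ X_∞, (∀ v ∈ X_∞, b(w,v) = 0) implies w = 0. Then e_ℓ ⇀ 0 weakly in H. -/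
open Filter Topology

/-!
Weak convergence is tested against `⟪e ℓ, z⟫`. Since `‖e ℓ‖ ≤ 1`, the vectors `z` for which this
tends to zero form a closed subspace `S`. It contains `X_∞ᗮ` (as `e ℓ ∈ X_∞`) and the Riesz
representers of `b(·, v)` for `v ∈ ⋃ X_ℓ` (by Galerkin orthogonality, `b(e ℓ, v) = 0` eventually).
A vector orthogonal to `S` therefore lies in `X_∞` and is `b`-orthogonal to `⋃ X_ℓ`, hence to its
closure `X_∞`, so it vanishes by definiteness; thus `S` is everything.
-/

section TendstoZero

variable {ι 𝕜 E F : Type*} [NontriviallyNormedField 𝕜] [NormedAddCommGroup E] [NormedSpace 𝕜 E]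
  [NormedAddCommGroup F] [NormedSpace 𝕜 F]

def ContinuousLinearMap.tendstoZeroSubmodule (φ : ι → E →L[𝕜] F) (l : Filter ι) :
    Submodule 𝕜 E where
  carrier := {x | Tendsto (fun i => φ i x) l (𝓝 0)}
  add_mem' hx hy := by simpa using hx.add hy
  zero_mem' := by simpa using tendsto_const_nhds
  smul_mem' c _ hx := by simpa using hx.const_smul c

theorem ContinuousLinearMap.isClosed_tendstoZeroSubmodule {φ : ι → E →L[𝕜] F} {C : ℝ}
    (hφ : ∀ i, ‖φ i‖ ≤ C) (l : Filter ι) :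
    IsClosed (tendstoZeroSubmodule φ l : Set E) :=
  have hequi : Equicontinuous ((↑) ∘ φ : ι → E → F) :=
    ((NormedSpace.equicontinuous_TFAE φ).out 5 1).mp (⟨C, hφ⟩ : ∃ C, ∀ i, ‖φ i‖ ≤ C)
  hequi.isClosed_setOfPred_tendsto continuous_const

end TendstoZero

section InnerProductSpace

variable {ι 𝕜 H : Type*} [RCLike 𝕜] [NormedAddCommGroup H] [InnerProductSpace 𝕜 H]

theorem norm_le_one_of_normalized_sub {u v y : H} (h0 : u = v → y = 0)
    (h1 : u ≠ v → y = ((‖u - v‖⁻¹ : ℝ) : 𝕜) • (u - v)) : ‖y‖ ≤ 1 := by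
  by_cases huv : u = v
  · simp [h0 huv]
  · rw [h1 huv, RCLike.ofReal_inv, norm_smul_inv_norm (sub_ne_zero.mpr huv)]

theorem exists_eq_smul_sub_of_normalized_sub {u v y : H} (h0 : u = v → y = 0)
    (h1 : u ≠ v → y = ((‖u - v‖⁻¹ : ℝ) : 𝕜) • (u - v)) : ∃ c : 𝕜, y = c • (u - v) := by
  by_cases huv : u = v
  · exact ⟨0, by simp [h0 huv]⟩
  · exact ⟨_, h1 huv⟩

variable [CompleteSpace H]

theorem Submodule.orthogonal_orthogonal_of_isClosed {K : Submodule 𝕜 H}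
    (hK : IsClosed (K : Set H)) : Kᗮᗮ = K :=
  K.orthogonal_orthogonal_eq_closure.trans hK.submodule_topologicalClosure_eq

theorem tendsto_dual_of_forall_tendsto_inner {e : ι → H} {l : Filter ι}
    (h : ∀ z, Tendsto (fun i => inner 𝕜 (e i) z) l (𝓝 0)) (f : H →L[𝕜] 𝕜) :
    Tendsto (fun i => f (e i)) l (𝓝 0) := by
  set g := (InnerProductSpace.toDual 𝕜 H).symm f
  have hf : ∀ x, f x = starRingEnd 𝕜 (inner 𝕜 x g) := fun x => by
    rw [inner_conj_symm, InnerProductSpace.toDual_symm_apply]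
  simpa only [hf, map_zero, Function.comp_def] using (RCLike.continuous_conj.tendsto 0).comp (h g)

theorem tendsto_inner_zero_of_tendsto_sesq_zero (B : H →L⋆[𝕜] H →L[𝕜] 𝕜) {K : Submodule 𝕜 H}
    (hK : IsClosed (K : Set H)) {D : Set H} (hKD : (K : Set H) ⊆ closure D)
    (hdef : ∀ w ∈ K, (∀ v ∈ K, B w v = 0) → w = 0) {e : ι → H} {l : Filter ι} {C : ℝ}
    (heK : ∀ i, e i ∈ K) (heC : ∀ i, ‖e i‖ ≤ C)
    (heD : ∀ v ∈ D, Tendsto (fun i => B (e i) v) l (𝓝 0)) (z : H) :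
    Tendsto (fun i => inner 𝕜 (e i) z) l (𝓝 0) := by
  set S := ContinuousLinearMap.tendstoZeroSubmodule (fun i => innerSL 𝕜 (e i)) l
  have hS : IsClosed (S : Set H) :=
    ContinuousLinearMap.isClosed_tendstoZeroSubmodule
      (fun i => (innerSL_apply_norm 𝕜 (e i)).trans_le (heC i)) l
  have hKS : Kᗮ ≤ S := fun x hx => by
    simpa [S, ContinuousLinearMap.tendstoZeroSubmodule,
      Submodule.inner_right_of_mem_orthogonal (heK _) hx] using tendsto_const_nhds
  set A := ContinuousLinearMap.adjoint (InnerProductSpace.continuousLinearMapOfBilin B)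
  have hA : ∀ w v, inner 𝕜 w (A v) = B w v := fun w v => by
    rw [ContinuousLinearMap.adjoint_inner_right,
      InnerProductSpace.continuousLinearMapOfBilin_apply]
  have hAS : ∀ v ∈ D, A v ∈ S := fun v hv => by
    change Tendsto (fun i => inner 𝕜 (e i) (A v)) l (𝓝 0)
    simpa only [hA] using heD v hv
  have hSperp : Sᗮ = ⊥ := by
    refine (Submodule.eq_bot_iff _).mpr fun w hw => hdef w ?_ fun v hv => ?_
    · rw [← Submodule.orthogonal_orthogonal_of_isClosed hK]
      exact Submodule.orthogonal_le hKS hw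
    · have hBD : Set.EqOn (B w) 0 D := fun v hv => by
        rw [← hA]
        exact Submodule.inner_left_of_mem_orthogonal (hAS v hv) hw
      exact hBD.closure (B w).continuous continuous_const (hKD hv)
  have hStop : S = ⊤ := by
    rw [← Submodule.orthogonal_orthogonal_of_isClosed hS, hSperp, Submodule.bot_orthogonal_eq_top]
  have hz : z ∈ S := hStop ▸ Submodule.mem_top
  exact hz

end InnerProductSpace

/-- The normalized Galerkin errors converge weakly to zero (Lemma 3.3). -/
theorem stmt17 {𝕜 : Type*} [RCLike 𝕜] {H : Type*} [NormedAddCommGroup H]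
    [InnerProductSpace 𝕜 H] [CompleteSpace H]
    (b : H → H → 𝕜) (M : ℝ)
    (hadd : ∀ x y v, b (x + y) v = b x v + b y v)
    (hsmul : ∀ (c : 𝕜) x v, b (c • x) v = starRingEnd 𝕜 c * b x v)
    (hlin : ∀ w, IsLinearMap 𝕜 (b w))
    (hcont : ∀ w v, ‖b w v‖ ≤ M * ‖w‖ * ‖v‖)
    (X : ℕ → Submodule 𝕜 H) (hnested : ∀ ℓ, X ℓ ≤ X (ℓ + 1))
    (u : H) (hu : u ∈ closure (⋃ ℓ, (X ℓ : Set H)))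
    (U : ℕ → H) (hUmem : ∀ ℓ, U ℓ ∈ X ℓ)
    (hGalerkin : ∀ ℓ, ∀ V ∈ X ℓ, b (u - U ℓ) V = 0)
    (hdef : ∀ w ∈ closure (⋃ ℓ, (X ℓ : Set H)),
      (∀ v ∈ closure (⋃ ℓ, (X ℓ : Set H)), b w v = 0) → w = 0)
    (e : ℕ → H)
    (he0 : ∀ ℓ, u = U ℓ → e ℓ = 0)
    (he1 : ∀ ℓ, u ≠ U ℓ → e ℓ = ((‖u - U ℓ‖⁻¹ : ℝ) : 𝕜) • (u - U ℓ)) :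
    ∀ f : H →L[𝕜] 𝕜, Tendsto (fun ℓ => f (e ℓ)) atTop (𝓝 0) := by
  have hmono : Monotone X := monotone_nat_of_le_succ hnested
  set Y := ⨆ ℓ, X ℓ
  set K := Y.topologicalClosure
  have hK : (K : Set H) = closure (⋃ ℓ, (X ℓ : Set H)) := by
    rw [Submodule.topologicalClosure_coe, Submodule.coe_iSup_of_directed X hmono.directed_le]
  let B : H →L⋆[𝕜] H →L[𝕜] 𝕜 :=
    (LinearMap.mk₂'ₛₗ (starRingEnd 𝕜) (RingHom.id 𝕜) b hadd hsmul (fun w => (hlin w).map_add)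
      (fun c w => (hlin w).map_smul c)).mkContinuous₂ M hcont
  have hscal : ∀ ℓ, ∃ c : 𝕜, e ℓ = c • (u - U ℓ) := fun ℓ =>
    exists_eq_smul_sub_of_normalized_sub (he0 ℓ) (he1 ℓ)
  have heK : ∀ ℓ, e ℓ ∈ K := fun ℓ => by
    obtain ⟨c, hc⟩ := hscal ℓ
    rw [hc]
    refine K.smul_mem c (K.sub_mem (by rwa [← SetLike.mem_coe, hK]) ?_)
    exact Y.le_topologicalClosure (le_iSup X ℓ (hUmem ℓ))
  have hBe : ∀ v ∈ ⋃ ℓ, (X ℓ : Set H), Tendsto (fun ℓ => B (e ℓ) v) atTop (𝓝 0) := by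
    intro v hv
    obtain ⟨m, hm⟩ := Set.mem_iUnion.mp hv
    refine tendsto_const_nhds.congr' ?_
    filter_upwards [eventually_ge_atTop m] with ℓ hℓ
    obtain ⟨c, hc⟩ := hscal ℓ
    change 0 = b (e ℓ) v
    rw [hc, hsmul, hGalerkin ℓ v (hmono hℓ hm), mul_zero]
  exact tendsto_dual_of_forall_tendsto_inner
    (tendsto_inner_zero_of_tendsto_sesq_zero B Y.isClosed_topologicalClosure hK.subset
      (fun w hw hBw => hdef w (hK ▸ hw) fun v hv => hBw v (by rwa [← SetLike.mem_coe, hK])) heK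
      (fun ℓ => norm_le_one_of_normalized_sub (he0 ℓ) (he1 ℓ)) hBe)
end

section
/- Let η_star, η_plus ≥ 0 and suppose there exist constants C_stb, C_rel', γ > 0 and a quantity d ≥ 0 (playing the role of ‖U₊ − U_*‖) such that: (i) stability |η₊(S) − η_*(S)| ≤ C_stb·d for the common part S, (ii) reduction η₊(R')² ≤ q_red·η_*(R)² + C_red²·d² on refined parts with 0 < q_red < 1, where η_*² = η_*(S)² + η_*(R)² and η₊² = η₊(S)² + η₊(R')², and (iii) d ≤ C_rel·γ^{-1}·η_*(R). Then for every 0 < θ < θ_opt := (1 + C_stb²C_rel²/γ²)^{-1} there exists 0 < κ_opt < 1 such that η₊ ≤ κ_opt·η_* implies θ·η_*² ≤ η_*(R)². -/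
/-!
With `c = C_stb C_rel / γ`, stability and discrete reliability give `η_*(S) ≤ η₊ + c η_*(R)`.
If `η_*(R)² < θ η_*²`, then `η_*(S) > √(1 - θ) η_*` and `c η_*(R) ≤ c √θ η_*`, so
`η₊ > (√(1 - θ) - c √θ) η_*`. This `κ` lies in `(0, 1)` exactly when `0 < θ < 1 / (1 + c²)`.
-/

noncomputable def optimalDorflerRatio (c θ : ℝ) : ℝ := √(1 - θ) - c * √θ

theorem optimalDorflerRatio_pos {c θ : ℝ} (hc : 0 ≤ c) (hθ0 : 0 ≤ θ)
    (hθ : θ < (1 + c ^ 2)⁻¹) : 0 < optimalDorflerRatio c θ := by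
  rw [← one_div, lt_div_iff₀ (by positivity)] at hθ
  rw [optimalDorflerRatio, sub_pos, Real.lt_sqrt (by positivity), mul_pow, Real.sq_sqrt hθ0]
  linarith

theorem optimalDorflerRatio_lt_one {c θ : ℝ} (hc : 0 ≤ c) (hθ0 : 0 < θ) :
    optimalDorflerRatio c θ < 1 := by
  have hsqrt : √(1 - θ) < 1 := (Real.sqrt_lt' one_pos).mpr (by linarith)
  have hcθ : 0 ≤ c * √θ := by positivity
  rw [optimalDorflerRatio]
  linarith

theorem mul_sq_le_of_le_optimalDorflerRatio {c θ x y z : ℝ} (hc : 0 ≤ c) (hθ1 : θ ≤ 1)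
    (hx : 0 ≤ x) (hz : 0 ≤ z) (hxyz : z ^ 2 = x ^ 2 + y ^ 2)
    (h : x ≤ optimalDorflerRatio c θ * z + c * y) : θ * z ^ 2 ≤ y ^ 2 := by
  by_contra! hlt
  have hy : y < √θ * z := by
    refine lt_of_abs_lt (abs_lt_of_sq_lt_sq ?_ (by positivity))
    rwa [mul_pow, Real.sq_sqrt (by nlinarith [sq_nonneg y, sq_nonneg z])]
  have hx' : √(1 - θ) * z < x := by
    refine lt_of_pow_lt_pow_left₀ 2 hx ?_
    rw [mul_pow, Real.sq_sqrt (by linarith)]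
    linarith
  have hcy : c * y ≤ c * (√θ * z) := mul_le_mul_of_nonneg_left hy.le hc
  rw [optimalDorflerRatio] at h
  linarith

theorem stmt18_general (ηS ηR ηpS ηpR d ηstar ηplus : ℝ)
    (hηS : 0 ≤ ηS) (hηstar : 0 ≤ ηstar) (hηplus : 0 ≤ ηplus)
    (hstar : ηstar ^ 2 = ηS ^ 2 + ηR ^ 2)
    (hplus : ηplus ^ 2 = ηpS ^ 2 + ηpR ^ 2)
    (Cstb Crel γ : ℝ)
    (hCstb : 0 < Cstb) (hCrel : 0 < Crel) (hγ : 0 < γ)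
    (hstb : |ηpS - ηS| ≤ Cstb * d)
    (hdrel : d ≤ Crel * γ⁻¹ * ηR) :
    ∀ θ : ℝ, 0 < θ → θ < (1 + Cstb ^ 2 * Crel ^ 2 / γ ^ 2)⁻¹ →
      ∃ κ : ℝ, 0 < κ ∧ κ < 1 ∧ (ηplus ≤ κ * ηstar → θ * ηstar ^ 2 ≤ ηR ^ 2) := by
  intro θ hθ0 hθ
  set c := Cstb * Crel * γ⁻¹
  have hc : 0 ≤ c := by positivity
  rw [show Cstb ^ 2 * Crel ^ 2 / γ ^ 2 = c ^ 2 by ring] at hθ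
  have hθ1 : θ ≤ 1 := hθ.le.trans (inv_le_one_of_one_le₀ (le_add_of_nonneg_right (sq_nonneg c)))
  refine ⟨optimalDorflerRatio c θ, optimalDorflerRatio_pos hc hθ0.le hθ,
    optimalDorflerRatio_lt_one hc hθ0, fun hle => ?_⟩
  refine mul_sq_le_of_le_optimalDorflerRatio hc hθ1 hηS hηstar hstar ?_
  have hpS : ηpS ≤ ηplus := (abs_le_of_sq_le_sq' (by nlinarith [sq_nonneg ηpR]) hηplus).2
  have hSpS : ηS - ηpS ≤ Cstb * d := (abs_sub_le_iff.mp hstb).2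
  have hdR : Cstb * d ≤ c * ηR := by
    calc Cstb * d ≤ Cstb * (Crel * γ⁻¹ * ηR) := mul_le_mul_of_nonneg_left hdrel hCstb.le
      _ = c * ηR := by ring
  linarith

/-- Abstract optimality of the Dörfler marking (Lemma 4.6). -/
theorem stmt18 (ηS ηR ηpS ηpR d ηstar ηplus : ℝ)
    (hηS : 0 ≤ ηS) (hηR : 0 ≤ ηR) (hηpS : 0 ≤ ηpS) (hηpR : 0 ≤ ηpR)
    (hd : 0 ≤ d) (hηstar : 0 ≤ ηstar) (hηplus : 0 ≤ ηplus)
    (hstar : ηstar ^ 2 = ηS ^ 2 + ηR ^ 2)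
    (hplus : ηplus ^ 2 = ηpS ^ 2 + ηpR ^ 2)
    (Cstb Crel γ Cred qred : ℝ)
    (hCstb : 0 < Cstb) (hCrel : 0 < Crel) (hγ : 0 < γ) (hCred : 0 < Cred)
    (hqred0 : 0 < qred) (hqred1 : qred < 1)
    (hstb : |ηpS - ηS| ≤ Cstb * d)
    (hred : ηpR ^ 2 ≤ qred * ηR ^ 2 + Cred ^ 2 * d ^ 2)
    (hdrel : d ≤ Crel * γ⁻¹ * ηR) :
    ∀ θ : ℝ, 0 < θ → θ < (1 + Cstb ^ 2 * Crel ^ 2 / γ ^ 2)⁻¹ →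
      ∃ κ : ℝ, 0 < κ ∧ κ < 1 ∧ (ηplus ≤ κ * ηstar → θ * ηstar ^ 2 ≤ ηR ^ 2) :=
  stmt18_general ηS ηR ηpS ηpR d ηstar ηplus hηS hηstar hηplus hstar hplus Cstb Crel γ hCstb hCrel
    hγ hstb hdrel
end

section
/- Let s > 0 and let (η_ℓ)_{ℓ∈ℕ}, (N_ℓ)_{ℓ∈ℕ} be sequences with η_ℓ > 0 and N_ℓ ∈ ℕ. Suppose: (i) #M_ℓ ≤ C_4·η_ℓ^{−1/s} for constants C_4 > 0 and all ℓ ≥ ℓ₀, (ii) the mesh-closure estimate N_ℓ − N_{ℓ₀} + 1 ≤ C_mesh·∑_{j=ℓ₀}^{ℓ} #M_j with C_mesh ≥ 1, and (iii) linear convergence η_ℓ ≤ C_lin·q_lin^{ℓ−j}·η_j for all ℓ₀ ≤ j ≤ ℓ with 0 < q_lin < 1. Then there exists C > 0 (depending only on C_4, C_mesh, C_lin, q_lin, s) such that η_ℓ ≤ C·(N_ℓ − N_{ℓ₀} + 1)^{−s} for all ℓ ≥ ℓ₀. -/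
/-!
With `t = 1/s`, linear convergence turns into `η_j^{-t} ≲ (q_lin^t)^{ℓ-j} η_ℓ^{-t}` for `j ≤ ℓ`,
so the counting estimate and a geometric series bound the total number of marked elements
`∑_{j=ℓ₀}^{ℓ} #M_j` by a multiple of `η_ℓ^{-1/s}`. The closure estimate transfers this bound to
`N_ℓ - N_{ℓ₀} + 1`, and raising it to the power `-s` gives the rate.
-/

open Finset

theorem sum_Icc_pow_sub_le {a : ℝ} (ha0 : 0 ≤ a) (ha1 : a < 1) (ℓ₀ ℓ : ℕ) :
    ∑ j ∈ Icc ℓ₀ ℓ, a ^ (ℓ - j) ≤ 1 / (1 - a) :=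
  calc ∑ j ∈ Icc ℓ₀ ℓ, a ^ (ℓ - j)
      ≤ ∑ j ∈ range (ℓ + 1), a ^ (ℓ + 1 - 1 - j) :=
      sum_le_sum_of_subset_of_nonneg
        (fun _ hj => mem_range.2 (Nat.lt_succ_of_le (mem_Icc.1 hj).2))
        fun _ _ _ => by positivity
    _ = ∑ i ∈ Ico 0 (ℓ + 1), a ^ i := by rw [sum_range_reflect (a ^ ·), range_eq_Ico]
    _ ≤ a ^ 0 / (1 - a) := geom_sum_Ico_le_of_lt_one ha0 ha1
    _ = 1 / (1 - a) := by rw [pow_zero]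

theorem rpow_neg_le_mul_rpow_neg_of_le_mul {x y c t : ℝ} (hx : 0 < x) (hy : 0 < y) (ht : 0 ≤ t)
    (h : y ≤ c * x) : x ^ (-t) ≤ c ^ t * y ^ (-t) := by
  have hc : 0 ≤ c := le_of_mul_le_mul_right (by simpa using hy.le.trans h) hx
  have hyt : y ^ t ≤ c ^ t * x ^ t := by
    rw [← Real.mul_rpow hc hx.le]
    exact Real.rpow_le_rpow hy.le h ht
  rw [Real.rpow_neg hx.le, Real.rpow_neg hy.le, ← div_eq_mul_inv,
    inv_le_iff_one_le_mul₀ (Real.rpow_pos_of_pos hx t), div_mul_eq_mul_div,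
    one_le_div₀ (Real.rpow_pos_of_pos hy t)]
  exact hyt

theorem sum_Icc_rpow_neg_le_of_linear_convergence {η : ℕ → ℝ} {C q t : ℝ} {ℓ₀ ℓ : ℕ}
    (hη : ∀ j, 0 < η j) (hC : 0 ≤ C) (hq0 : 0 ≤ q) (hq1 : q < 1) (ht : 0 < t)
    (hlin : ∀ j ∈ Icc ℓ₀ ℓ, η ℓ ≤ C * q ^ (ℓ - j) * η j) :
    ∑ j ∈ Icc ℓ₀ ℓ, η j ^ (-t) ≤ C ^ t / (1 - q ^ t) * η ℓ ^ (-t) :=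
  calc ∑ j ∈ Icc ℓ₀ ℓ, η j ^ (-t)
      ≤ ∑ j ∈ Icc ℓ₀ ℓ, C ^ t * η ℓ ^ (-t) * (q ^ t) ^ (ℓ - j) := by
        refine sum_le_sum fun j hj => ?_
        calc η j ^ (-t) ≤ (C * q ^ (ℓ - j)) ^ t * η ℓ ^ (-t) :=
              rpow_neg_le_mul_rpow_neg_of_le_mul (hη j) (hη ℓ) ht.le (hlin j hj)
          _ = C ^ t * η ℓ ^ (-t) * (q ^ t) ^ (ℓ - j) := by
              rw [Real.mul_rpow hC (by positivity), ← Real.rpow_pow_comm hq0]; ring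
    _ = C ^ t * η ℓ ^ (-t) * ∑ j ∈ Icc ℓ₀ ℓ, (q ^ t) ^ (ℓ - j) := by rw [mul_sum]
    _ ≤ C ^ t * η ℓ ^ (-t) * (1 / (1 - q ^ t)) :=
      mul_le_mul_of_nonneg_left
        (sum_Icc_pow_sub_le (by positivity) (Real.rpow_lt_one hq0 hq1 ht) ℓ₀ ℓ)
        (mul_nonneg (Real.rpow_nonneg hC t) (Real.rpow_pos_of_pos (hη ℓ) _).le)
    _ = C ^ t / (1 - q ^ t) * η ℓ ^ (-t) := by ring

/-- Combination of counting, mesh-closure, and linear-convergence estimates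
(optimal convergence rates, Theorem 4.5). -/
theorem stmt19 (s C4 Cmesh Clin qlin : ℝ) (hs : 0 < s) (hC4 : 0 < C4)
    (hCmesh : 1 ≤ Cmesh) (hClin : 0 < Clin) (hq0 : 0 < qlin) (hq1 : qlin < 1)
    (η : ℕ → ℝ) (hη : ∀ ℓ, 0 < η ℓ)
    (Mk N : ℕ → ℕ) (ℓ₀ : ℕ)
    (hmark : ∀ ℓ, ℓ₀ ≤ ℓ → (Mk ℓ : ℝ) ≤ C4 * η ℓ ^ (-(1 / s)))
    (hclosure : ∀ ℓ, ℓ₀ ≤ ℓ →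
      ((N ℓ - N ℓ₀ + 1 : ℕ) : ℝ) ≤ Cmesh * ∑ j ∈ Icc ℓ₀ ℓ, (Mk j : ℝ))
    (hlin : ∀ j ℓ : ℕ, ℓ₀ ≤ j → j ≤ ℓ → η ℓ ≤ Clin * qlin ^ (ℓ - j) * η j) :
    ∃ C > 0, ∀ ℓ, ℓ₀ ≤ ℓ → η ℓ ≤ C * ((N ℓ - N ℓ₀ + 1 : ℕ) : ℝ) ^ (-s) := by
  set t := 1 / s
  have ht : 0 < t := by positivity
  set K := Cmesh * C4 * (Clin ^ t / (1 - qlin ^ t))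
  have hK : 0 < K := mul_pos (mul_pos (by linarith) hC4)
    (div_pos (Real.rpow_pos_of_pos hClin t) (sub_pos.2 (Real.rpow_lt_one hq0.le hq1 ht)))
  refine ⟨K ^ s, Real.rpow_pos_of_pos hK s, fun ℓ hℓ => ?_⟩
  have hcount : ((N ℓ - N ℓ₀ + 1 : ℕ) : ℝ) ≤ K * η ℓ ^ (-t) :=
    calc ((N ℓ - N ℓ₀ + 1 : ℕ) : ℝ) ≤ Cmesh * ∑ j ∈ Icc ℓ₀ ℓ, (Mk j : ℝ) := hclosure ℓ hℓ
      _ ≤ Cmesh * ∑ j ∈ Icc ℓ₀ ℓ, C4 * η j ^ (-t) := by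
          gcongr with j hj
          exact hmark j (mem_Icc.1 hj).1
      _ = Cmesh * C4 * ∑ j ∈ Icc ℓ₀ ℓ, η j ^ (-t) := by rw [← mul_sum, mul_assoc]
      _ ≤ Cmesh * C4 * (Clin ^ t / (1 - qlin ^ t) * η ℓ ^ (-t)) := by
          gcongr
          exact sum_Icc_rpow_neg_le_of_linear_convergence hη hClin.le hq0.le hq1 ht
            fun j hj => hlin j ℓ (mem_Icc.1 hj).1 (mem_Icc.1 hj).2
      _ = K * η ℓ ^ (-t) := (mul_assoc _ _ _).symm
  calc η ℓ = (η ℓ ^ (-t)) ^ (-s) := by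
        rw [← Real.rpow_mul (hη ℓ).le, neg_mul_neg, one_div_mul_cancel hs.ne', Real.rpow_one]
    _ ≤ K ^ s * ((N ℓ - N ℓ₀ + 1 : ℕ) : ℝ) ^ (-s) :=
        rpow_neg_le_mul_rpow_neg_of_le_mul (Real.rpow_pos_of_pos (hη ℓ) _) (by positivity) hs.le
          hcount
end
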